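/- Every completely prime submodule N of an R-module M satisfies the radical formula: ⟨E_M(N)⟩ = β(N) = N. -/

import Mathlib

/-- A submodule `P` is completely prime if it is proper and `a • m ∈ P` implies
`m ∈ P` or `a • M ⊆ P`. -/
def IsCompletelyPrimeSubmodule {R : Type*} [Ring R] {M : Type*} [AddCommGroup M] [Module R M]
    (P : Submodule R M) : Prop :=
  P ≠ ⊤ ∧ ∀ (a : R) (m : M), a • m ∈ P → m ∈ P ∨ ∀ x : M, a • x ∈ P

/-- A submodule `P` is prime if it is proper and for every two-sided ideal `A` of `R`
and submodule `N`, `A N ⊆ P` implies `N ⊆ P` or `A M ⊆ P`. -/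
def IsPrimeSubmodule {R : Type*} [Ring R] {M : Type*} [AddCommGroup M] [Module R M]
    (P : Submodule R M) : Prop :=
  P ≠ ⊤ ∧ ∀ (A : TwoSidedIdeal R) (N : Submodule R M),
    (∀ a ∈ A, ∀ n ∈ N, a • n ∈ P) → N ≤ P ∨ ∀ a ∈ A, ∀ x : M, a • x ∈ P

/-- The prime radical `β(N)`: the intersection of all prime submodules containing `N`
(equal to `⊤ = M` if there are none). -/
def primeRadical {R : Type*} [Ring R] {M : Type*} [AddCommGroup M] [Module R M]
    (N : Submodule R M) : Submodule R M :=
  sInf {P | IsPrimeSubmodule P ∧ N ≤ P}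

/-- The completely prime radical `β_co(N)`: the intersection of all completely prime
submodules containing `N` (equal to `⊤ = M` if there are none). -/
def cpRadical {R : Type*} [Ring R] {M : Type*} [AddCommGroup M] [Module R M]
    (N : Submodule R M) : Submodule R M :=
  sInf {P | IsCompletelyPrimeSubmodule P ∧ N ≤ P}

/-- The envelope `E_M(N) = {r • m : r^k • m ∈ N for some positive integer k}`. -/
def envelope {R : Type*} [Ring R] {M : Type*} [AddCommGroup M] [Module R M]
    (N : Submodule R M) : Set M :=
  {x | ∃ (r : R) (m : M) (k : ℕ), 0 < k ∧ r ^ k • m ∈ N ∧ x = r • m}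

/-- A submodule `N` is completely semiprime if `a ^ 2 • m ∈ N` implies `a • m ∈ N`. -/
def IsCompletelySemiprimeSubmodule {R : Type*} [Ring R] {M : Type*} [AddCommGroup M]
    [Module R M] (N : Submodule R M) : Prop :=
  ∀ (a : R) (m : M), a ^ 2 • m ∈ N → a • m ∈ N

section

variable {R : Type*} [Ring R] {M : Type*} [AddCommGroup M] [Module R M] {N : Submodule R M}

theorem IsPrimeSubmodule.primeRadical_eq_self (hN : IsPrimeSubmodule N) : primeRadical N = N :=
  le_antisymm (sInf_le ⟨hN, le_rfl⟩) (le_sInf fun _ hP => hP.2)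

theorem subset_envelope (N : Submodule R M) : (N : Set M) ⊆ envelope N :=
  fun x hx => ⟨1, x, 1, one_pos, by simpa using hx, (one_smul R x).symm⟩

namespace IsCompletelyPrimeSubmodule

theorem isPrimeSubmodule (hN : IsCompletelyPrimeSubmodule N) : IsPrimeSubmodule N := by
  refine ⟨hN.1, fun A L hAL => or_iff_not_imp_left.2 fun hL a ha x => ?_⟩
  obtain ⟨n, hnL, hnN⟩ := Set.not_subset.1 hL
  exact (hN.2 a n (hAL a ha n hnL)).resolve_left hnN x

theorem smul_mem_of_pow_succ_smul_mem (hN : IsCompletelyPrimeSubmodule N) {r : R} {m : M} :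
    ∀ {k : ℕ}, r ^ (k + 1) • m ∈ N → r • m ∈ N
  | 0, h => by simpa using h
  | k + 1, h => by
    rw [pow_succ', mul_smul] at h
    exact (hN.2 r _ h).elim hN.smul_mem_of_pow_succ_smul_mem (· m)

theorem envelope_subset (hN : IsCompletelyPrimeSubmodule N) : envelope N ⊆ N := by
  rintro _ ⟨r, m, k, hk, hrm, rfl⟩
  obtain ⟨k, rfl⟩ := Nat.exists_eq_succ_of_ne_zero hk.ne'
  exact hN.smul_mem_of_pow_succ_smul_mem hrm

theorem span_envelope_eq_self (hN : IsCompletelyPrimeSubmodule N) :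
    Submodule.span R (envelope N) = N :=
  le_antisymm (Submodule.span_le.2 hN.envelope_subset)
    ((Submodule.span_eq N).symm.le.trans (Submodule.span_mono (subset_envelope N)))

end IsCompletelyPrimeSubmodule

end

/-- every completely prime submodule satisfies the radical formula. -/
theorem radical_formula_of_completelyPrime {R : Type*} [Ring R] {M : Type*}
    [AddCommGroup M] [Module R M] (N : Submodule R M)
    (hcp : IsCompletelyPrimeSubmodule N) :
    Submodule.span R (envelope N) = primeRadical N ∧ primeRadical N = N :=
  have hrad := hcp.isPrimeSubmodule.primeRadical_eq_self
  ⟨hcp.span_envelope_eq_self.trans hrad.symm, hrad⟩
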